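/- Let x, t > 0 and λ ∈ ℂ \ {0} with Im λ ≥ 0, and let a_λ = 2|μ|/|λ|. Then: (a) if t ≤ x < a_λ then N(x,t,λ) = (tλ)^{−2μ}·B; (b) if t < a_λ ≤ x then every entry of N(x,t,λ) has modulus at most e^{2π|Im μ|}·(|λ|·t)^{−2Re μ}; (c) if a_λ ≤ t ≤ x then every entry of N(x,t,λ) has modulus at most 1. -/

import Mathlib

/-! `B` is antidiagonal, so `N(x,t,λ)` is antidiagonal with entries `F₁(xλ) F₂(tλ)² / F₂(xλ)` and
`-F₁(tλ) F₂(tλ)`. Below the threshold both factors are `w^{-μ}`, giving `(tλ)^{-2μ}`; above it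
`|e^{±iw}| = e^{∓Im w}`, and `Im(xλ) ≥ Im(tλ) ≥ 0` makes the exponentials contract, while
`|w^{-μ}| ≤ e^{π|Im μ|} |w|^{-Re μ}` because `|arg w| ≤ π`. -/

open Complex Matrix Set

noncomputable def Bmat : Matrix (Fin 2) (Fin 2) ℂ := !![0, 1; -1, 0]

/-- `R₁ = i` (index 0), `R₂ = -i` (index 1). -/
noncomputable def Rcoef : Fin 2 → ℂ := ![Complex.I, -Complex.I]

/-- `F_j(w) = w^{-μ}` for `|w| < 2|μ|`, `F_j(w) = e^{R_j w}` for `|w| ≥ 2|μ|`. -/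
noncomputable def Ffun (μ : ℂ) (j : Fin 2) (w : ℂ) : ℂ :=
  if ‖w‖ < 2 * ‖μ‖ then w ^ (-μ) else Complex.exp (Rcoef j * w)

/-- `F(w) = diag(F₁(w), F₂(w))`. -/
noncomputable def Fmat (μ : ℂ) (w : ℂ) : Matrix (Fin 2) (Fin 2) ℂ :=
  Matrix.diagonal (fun j => Ffun μ j w)

/-- `N(x,t,λ) = F(xλ) B F(tλ) · (F₂(tλ)/F₂(xλ))`. -/
noncomputable def Nmat (μ : ℂ) (x t : ℝ) (lam : ℂ) : Matrix (Fin 2) (Fin 2) ℂ :=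
  (Ffun μ 1 ((t : ℂ) * lam) / Ffun μ 1 ((x : ℂ) * lam)) •
    (Fmat μ ((x : ℂ) * lam) * Bmat * Fmat μ ((t : ℂ) * lam))

section Ffun

variable (μ : ℂ) {w : ℂ}

lemma Ffun_of_norm_lt (j : Fin 2) (hw : ‖w‖ < 2 * ‖μ‖) : Ffun μ j w = w ^ (-μ) :=
  if_pos hw

lemma Ffun_of_le_norm (j : Fin 2) (hw : 2 * ‖μ‖ ≤ ‖w‖) :
    Ffun μ j w = Complex.exp (Rcoef j * w) :=
  if_neg hw.not_gt

lemma norm_Ffun_zero_of_le_norm (hw : 2 * ‖μ‖ ≤ ‖w‖) : ‖Ffun μ 0 w‖ = Real.exp (-w.im) := by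
  simp [Ffun_of_le_norm μ 0 hw, Rcoef, Complex.norm_exp]

lemma norm_Ffun_one_of_le_norm (hw : 2 * ‖μ‖ ≤ ‖w‖) : ‖Ffun μ 1 w‖ = Real.exp w.im := by
  simp [Ffun_of_le_norm μ 1 hw, Rcoef, Complex.norm_exp]

lemma Ffun_ne_zero (j : Fin 2) (hw : w ≠ 0) : Ffun μ j w ≠ 0 := by
  unfold Ffun
  split_ifs
  · simp [Complex.cpow_eq_zero_iff, hw]
  · exact Complex.exp_ne_zero _

end Ffun

lemma Nmat_eq (μ : ℂ) (x t : ℝ) (lam : ℂ) (hw : Ffun μ 1 ((x : ℂ) * lam) ≠ 0) :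
    Nmat μ x t lam =
      !![0, Ffun μ 0 ((x : ℂ) * lam) * Ffun μ 1 ((t : ℂ) * lam) ^ 2 / Ffun μ 1 ((x : ℂ) * lam);
        -(Ffun μ 0 ((t : ℂ) * lam) * Ffun μ 1 ((t : ℂ) * lam)), 0] := by
  unfold Nmat Fmat
  generalize (x : ℂ) * lam = w at *
  ext i j
  fin_cases i <;> fin_cases j <;> simp [Bmat] <;> field_simp

lemma norm_cpow_le_exp_pi_mul (w y : ℂ) :
    ‖w ^ y‖ ≤ Real.exp (Real.pi * |y.im|) * ‖w‖ ^ y.re := by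
  refine (Complex.norm_cpow_le w y).trans ?_
  rw [div_eq_mul_inv, ← Real.exp_neg, mul_comm]
  gcongr
  calc -(w.arg * y.im) ≤ |w.arg| * |y.im| := by rw [← abs_mul]; exact neg_le_abs _
    _ ≤ Real.pi * |y.im| := by gcongr; exact Complex.abs_arg_le_pi w

lemma norm_ofReal_mul_of_nonneg {r : ℝ} (hr : 0 ≤ r) (lam : ℂ) : ‖(r : ℂ) * lam‖ = ‖lam‖ * r := by
  rw [norm_mul, Complex.norm_real, Real.norm_of_nonneg hr, mul_comm]

lemma norm_ofReal_mul_lt_iff {r : ℝ} (hr : 0 ≤ r) {lam : ℂ} (hlam : lam ≠ 0) (c : ℝ) :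
    ‖(r : ℂ) * lam‖ < c ↔ r < c / ‖lam‖ := by
  rw [norm_ofReal_mul_of_nonneg hr, mul_comm, lt_div_iff₀ (norm_pos_iff.2 hlam)]

lemma le_norm_ofReal_mul_iff {r : ℝ} (hr : 0 ≤ r) {lam : ℂ} (hlam : lam ≠ 0) (c : ℝ) :
    c ≤ ‖(r : ℂ) * lam‖ ↔ c / ‖lam‖ ≤ r := by
  simpa only [not_lt] using (norm_ofReal_mul_lt_iff hr hlam c).not

lemma norm_ofReal_mul_le_of_le {r s : ℝ} (hr : 0 ≤ r) (hrs : r ≤ s) (lam : ℂ) :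
    ‖(r : ℂ) * lam‖ ≤ ‖(s : ℂ) * lam‖ := by
  rw [norm_ofReal_mul_of_nonneg hr, norm_ofReal_mul_of_nonneg (hr.trans hrs)]
  gcongr

lemma im_ofReal_mul_le_of_le {r s : ℝ} (hrs : r ≤ s) {lam : ℂ} (hlam : 0 ≤ lam.im) :
    ((r : ℂ) * lam).im ≤ ((s : ℂ) * lam).im := by
  simpa only [Complex.re_ofReal_mul, Complex.im_ofReal_mul] using
    mul_le_mul_of_nonneg_right hrs hlam

section Nmat

variable {μ : ℂ} {x t : ℝ} {lam : ℂ}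

lemma forall_norm_Nmat_apply_le {C : ℝ} (hC : 0 ≤ C) (hw : Ffun μ 1 ((x : ℂ) * lam) ≠ 0)
    (h01 : ‖Ffun μ 0 ((x : ℂ) * lam) * Ffun μ 1 ((t : ℂ) * lam) ^ 2 / Ffun μ 1 ((x : ℂ) * lam)‖ ≤ C)
    (h10 : ‖Ffun μ 0 ((t : ℂ) * lam) * Ffun μ 1 ((t : ℂ) * lam)‖ ≤ C) :
    ∀ i j : Fin 2, ‖Nmat μ x t lam i j‖ ≤ C := by
  rw [Nmat_eq μ x t lam hw]
  intro i j
  fin_cases i <;> fin_cases j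
  · simpa using hC
  · simpa using h01
  · simpa using h10
  · simpa using hC

lemma Nmat_eq_cpow_smul_Bmat (hw : (x : ℂ) * lam ≠ 0) (hx : ‖(x : ℂ) * lam‖ < 2 * ‖μ‖)
    (ht : ‖(t : ℂ) * lam‖ < 2 * ‖μ‖) :
    Nmat μ x t lam = ((t : ℂ) * lam) ^ (-(2 * μ)) • Bmat := by
  have hFx : ((x : ℂ) * lam) ^ (-μ) ≠ 0 := by
    simpa [← Ffun_of_norm_lt μ 1 hx] using Ffun_ne_zero μ 1 hw
  rw [Nmat_eq μ x t lam (Ffun_ne_zero μ 1 hw)]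
  simp only [Ffun_of_norm_lt μ _ hx, Ffun_of_norm_lt μ _ ht, mul_div_right_comm,
    div_self hFx, one_mul, ← pow_two, mul_neg, ← Complex.cpow_ofNat_mul]
  ext i j
  fin_cases i <;> fin_cases j <;> simp [Bmat]

lemma forall_norm_Nmat_apply_le_of_norm_lt_le (ht : ‖(t : ℂ) * lam‖ < 2 * ‖μ‖)
    (hx : 2 * ‖μ‖ ≤ ‖(x : ℂ) * lam‖) (him : 0 ≤ ((x : ℂ) * lam).im) :
    ∀ i j : Fin 2, ‖Nmat μ x t lam i j‖ ≤
      Real.exp (2 * Real.pi * |μ.im|) * ‖(t : ℂ) * lam‖ ^ (-(2 * μ.re)) := by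
  have hsq : ‖((t : ℂ) * lam) ^ (-μ)‖ ^ 2 ≤
      Real.exp (2 * Real.pi * |μ.im|) * ‖(t : ℂ) * lam‖ ^ (-(2 * μ.re)) := by
    calc ‖((t : ℂ) * lam) ^ (-μ)‖ ^ 2 = ‖((t : ℂ) * lam) ^ (-(2 * μ))‖ := by
          rw [← norm_pow, ← Complex.cpow_ofNat_mul, mul_neg]
      _ ≤ _ := norm_cpow_le_exp_pi_mul _ _
      _ = _ := by
          congr 2
          · simp [abs_mul]; ring
          · simp
  refine forall_norm_Nmat_apply_le (by positivity) ?_ ?_ ?_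
  · rw [Ffun_of_le_norm μ 1 hx]; exact Complex.exp_ne_zero _
  · rw [norm_div, norm_mul, norm_Ffun_zero_of_le_norm μ hx, norm_Ffun_one_of_le_norm μ hx,
      norm_pow, Ffun_of_norm_lt μ 1 ht]
    calc Real.exp (-((x : ℂ) * lam).im) * ‖((t : ℂ) * lam) ^ (-μ)‖ ^ 2 /
          Real.exp ((x : ℂ) * lam).im
        ≤ 1 * ‖((t : ℂ) * lam) ^ (-μ)‖ ^ 2 / 1 := by
          gcongr
          · exact Real.exp_le_one_iff.2 (neg_nonpos.2 him)
          · exact Real.one_le_exp him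
      _ ≤ _ := by simpa using hsq
  · rw [Ffun_of_norm_lt μ 0 ht, Ffun_of_norm_lt μ 1 ht, ← pow_two, norm_pow]
    exact hsq

lemma forall_norm_Nmat_apply_le_one (ht : 2 * ‖μ‖ ≤ ‖(t : ℂ) * lam‖)
    (hx : 2 * ‖μ‖ ≤ ‖(x : ℂ) * lam‖) (him : ((t : ℂ) * lam).im ≤ ((x : ℂ) * lam).im) :
    ∀ i j : Fin 2, ‖Nmat μ x t lam i j‖ ≤ 1 := by
  refine forall_norm_Nmat_apply_le zero_le_one ?_ ?_ ?_
  · rw [Ffun_of_le_norm μ 1 hx]; exact Complex.exp_ne_zero _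
  · rw [norm_div, norm_mul, norm_pow, norm_Ffun_zero_of_le_norm μ hx,
      norm_Ffun_one_of_le_norm μ hx, norm_Ffun_one_of_le_norm μ ht, ← Real.exp_nat_mul,
      ← Real.exp_add, ← Real.exp_sub, Real.exp_le_one_iff]
    push_cast
    linarith
  · rw [norm_mul, norm_Ffun_zero_of_le_norm μ ht, norm_Ffun_one_of_le_norm μ ht,
      ← Real.exp_add, neg_add_cancel, Real.exp_zero]

end Nmat

theorem stmt12_general (μ : ℂ) (x t : ℝ) (hx : 0 < x) (ht : 0 < t)
    (lam : ℂ) (hlam : lam ≠ 0) (hIm : 0 ≤ lam.im) :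
    -- (a)
    (t ≤ x → x < 2 * ‖μ‖ / ‖lam‖ →
      Nmat μ x t lam = (((t : ℂ) * lam) ^ (-(2 * μ))) • Bmat) ∧
    -- (b)
    (t < 2 * ‖μ‖ / ‖lam‖ → 2 * ‖μ‖ / ‖lam‖ ≤ x →
      ∀ i j : Fin 2, ‖Nmat μ x t lam i j‖ ≤
        Real.exp (2 * Real.pi * |μ.im|) * (‖lam‖ * t) ^ (-(2 * μ.re))) ∧
    -- (c)
    (2 * ‖μ‖ / ‖lam‖ ≤ t → t ≤ x →
      ∀ i j : Fin 2, ‖Nmat μ x t lam i j‖ ≤ 1) := by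
  have hw : (x : ℂ) * lam ≠ 0 := mul_ne_zero (Complex.ofReal_ne_zero.2 hx.ne') hlam
  simp only [← norm_ofReal_mul_lt_iff hx.le hlam, ← norm_ofReal_mul_lt_iff ht.le hlam,
    ← le_norm_ofReal_mul_iff hx.le hlam, ← le_norm_ofReal_mul_iff ht.le hlam,
    ← norm_ofReal_mul_of_nonneg ht.le]
  refine ⟨fun htx hxa => ?_, fun hta hax => ?_, fun hta htx => ?_⟩
  · exact Nmat_eq_cpow_smul_Bmat hw hxa
      ((norm_ofReal_mul_le_of_le ht.le htx lam).trans_lt hxa)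
  · exact forall_norm_Nmat_apply_le_of_norm_lt_le hta hax
      (by simpa using mul_nonneg hx.le hIm)
  · exact forall_norm_Nmat_apply_le_one hta (hta.trans (norm_ofReal_mul_le_of_le ht.le htx lam))
      (im_ofReal_mul_le_of_le htx hIm)

theorem stmt12 (μ : ℂ) (hμ : 0 < μ.re) (x t : ℝ) (hx : 0 < x) (ht : 0 < t)
    (lam : ℂ) (hlam : lam ≠ 0) (hIm : 0 ≤ lam.im) :
    -- (a)
    (t ≤ x → x < 2 * ‖μ‖ / ‖lam‖ →
      Nmat μ x t lam = (((t : ℂ) * lam) ^ (-(2 * μ))) • Bmat) ∧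
    -- (b)
    (t < 2 * ‖μ‖ / ‖lam‖ → 2 * ‖μ‖ / ‖lam‖ ≤ x →
      ∀ i j : Fin 2, ‖Nmat μ x t lam i j‖ ≤
        Real.exp (2 * Real.pi * |μ.im|) * (‖lam‖ * t) ^ (-(2 * μ.re))) ∧
    -- (c)
    (2 * ‖μ‖ / ‖lam‖ ≤ t → t ≤ x →
      ∀ i j : Fin 2, ‖Nmat μ x t lam i j‖ ≤ 1) :=
  stmt12_general μ x t hx ht lam hlam hIm
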